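/- arXiv:1601.03107 — 3 statements merged into one kernel-verified Lean document; each statement's English description precedes it below -/
import Mathlib

section
/- Erosion commutes with Möbius inversion: if X : Dgm → G is constructible, Y : Dgm → G is finite, and X(I) = Σ_{J ⊇ I} Y(J) for all I, then for every ε ≥ 0 and every I ∈ Dgm, X(Grow^ε(I)) = Σ_{J ⊇ I} Y(Grow^ε(J)). -/
/-!
`Grow^ε` is injective and maps the intervals containing `I` exactly onto the intervals
containing `Grow^ε I`: a preimage of `K ⊇ Grow^ε I` is `K` shrunk by `ε` at both ends. Hence
`Σ_{K ⊇ Grow^ε I} Y(K)` is a reindexing of `Σ_{J ⊇ I} Y(Grow^ε J)`.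
-/

open scoped Classical

/-- The poset `Dgm`: half-open intervals `[p,q)` with `p<q` together with `[p,∞)`,
encoded as a pair of a real left endpoint and an `EReal` right endpoint. -/
def Dgm : Type := {x : ℝ × EReal // (x.1 : EReal) < x.2}

/-- The underlying subset of `ℝ` of an interval in `Dgm`. -/
def Dgm.set (I : Dgm) : Set ℝ := {r : ℝ | I.1.1 ≤ r ∧ (r : EReal) < I.1.2}

/-- Containment of intervals: `J ⊇ I`. -/
def Dgm.sub (I J : Dgm) : Prop := I.set ⊆ J.set

/-- The half-open interval `[p,q)`. -/
def Dgm.mkI (p q : ℝ) (h : p < q) : Dgm := ⟨(p, (q : EReal)), by simpa using EReal.coe_lt_coe_iff.mpr h⟩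

/-- The half-infinite interval `[p,∞)`. -/
noncomputable def Dgm.mkInf (p : ℝ) : Dgm := ⟨(p, ⊤), by simpa using EReal.coe_lt_top p⟩

variable {G : Type*} [AddCommGroup G]

/-- `X : Dgm → G` is `S`-constructible. -/
def SConstructible (S : Set ℝ) (X : Dgm → G) : Prop :=
  ∀ I J : Dgm, I.sub J → J.set ∩ S = I.set ∩ S → X I = X J

/-- `Y : Dgm → G` is `S`-finite. -/
def SFinite (S : Set ℝ) (Y : Dgm → G) : Prop :=
  ∀ I : Dgm, Y I ≠ 0 →
    (∃ si ∈ S, ∃ sj ∈ S, ∃ h : si < sj, I = Dgm.mkI si sj h) ∨ (∃ si ∈ S, I = Dgm.mkInf si)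

/-- The cumulative sum `Σ_{J ⊇ I} Y(J)`. -/
noncomputable def cumSum (Y : Dgm → G) (I : Dgm) : G := ∑ᶠ (J : Dgm) (_ : I.sub J), Y J


/-- `Grow^ε` sends `[p,q)` to `[p-ε, q+ε)` and `[p,∞)` to `[p-ε,∞)`. -/
noncomputable def Dgm.grow (ε : ℝ) (hε : 0 ≤ ε) (I : Dgm) : Dgm :=
  ⟨(I.1.1 - ε, I.1.2 + (ε : EReal)), by
    calc ((I.1.1 - ε : ℝ) : EReal) ≤ (I.1.1 : EReal) :=
          EReal.coe_le_coe_iff.mpr (sub_le_self _ hε)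
      _ < I.1.2 := I.2
      _ ≤ I.1.2 + (ε : EReal) := le_add_of_nonneg_right (by exact_mod_cast hε)⟩

namespace Dgm

lemma ext {I J : Dgm} (h₁ : I.1.1 = J.1.1) (h₂ : I.1.2 = J.1.2) : I = J :=
  Subtype.ext (Prod.ext h₁ h₂)

lemma sub_iff {I J : Dgm} : I.sub J ↔ J.1.1 ≤ I.1.1 ∧ I.1.2 ≤ J.1.2 := by
  refine ⟨fun h => ⟨(h ⟨le_rfl, I.2⟩).1, le_of_forall_lt fun c hc => ?_⟩, ?_⟩
  · induction c with
    | bot => exact bot_lt_iff_ne_bot.2 (ne_bot_of_gt J.2)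
    | top => exact absurd hc not_top_lt
    | coe r =>
      rcases le_total r I.1.1 with hr | hr
      · exact (EReal.coe_le_coe_iff.2 hr).trans_lt (h ⟨le_rfl, I.2⟩).2
      · exact (h ⟨hr, hc⟩).2
  · rintro ⟨h₁, h₂⟩ r ⟨hr₁, hr₂⟩
    exact ⟨h₁.trans hr₁, hr₂.trans_le h₂⟩

section grow

variable (ε : ℝ) (hε : 0 ≤ ε)

@[simp]
lemma grow_fst (I : Dgm) : (grow ε hε I).1.1 = I.1.1 - ε := rfl

@[simp]
lemma grow_snd (I : Dgm) : (grow ε hε I).1.2 = I.1.2 + (ε : EReal) := rfl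

lemma grow_injective : Function.Injective (grow ε hε) := fun I J h => by
  refine ext (by simpa using congrArg (·.1.1) h) ?_
  simpa only [grow_snd, EReal.add_sub_cancel_right] using congrArg (·.1.2 - (ε : EReal)) h

lemma grow_sub_grow {I J : Dgm} (h : I.sub J) : (grow ε hε I).sub (grow ε hε J) := by
  obtain ⟨h₁, h₂⟩ := sub_iff.1 h
  exact sub_iff.2 ⟨sub_le_sub_right h₁ ε, add_le_add_left h₂ _⟩

lemma exists_grow_eq_of_grow_sub {I K : Dgm} (h : (grow ε hε I).sub K) :
    ∃ J, I.sub J ∧ grow ε hε J = K := by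
  obtain ⟨h₁, h₂⟩ := sub_iff.1 h
  have h₁' : K.1.1 + ε ≤ I.1.1 := le_sub_iff_add_le.1 h₁
  have h₂' : I.1.2 ≤ K.1.2 - (ε : EReal) :=
    (EReal.le_sub_iff_add_le (.inl (EReal.coe_ne_bot ε)) (.inl (EReal.coe_ne_top ε))).2 h₂
  let J : Dgm := ⟨(K.1.1 + ε, K.1.2 - ε),
    (EReal.coe_le_coe_iff.2 h₁').trans_lt (I.2.trans_le h₂')⟩
  refine ⟨J, sub_iff.2 ⟨h₁', h₂'⟩, ext ?_ ?_⟩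
  · exact add_sub_cancel_right _ _
  · exact EReal.sub_add_cancel

lemma image_grow_setOf_sub (I : Dgm) :
    grow ε hε '' {J | I.sub J} = {K | (grow ε hε I).sub K} := by
  ext K
  constructor
  · rintro ⟨J, hJ, rfl⟩
    exact grow_sub_grow ε hε hJ
  · exact exists_grow_eq_of_grow_sub ε hε

end grow

end Dgm

theorem grow_commutes_mobius_general (X Y : Dgm → G)
    (hinv : ∀ I : Dgm, X I = cumSum Y I) :
    ∀ (ε : ℝ) (hε : 0 ≤ ε) (I : Dgm),
      X (Dgm.grow ε hε I) = ∑ᶠ (J : Dgm) (_ : I.sub J), Y (Dgm.grow ε hε J) := by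
  intro ε hε I
  calc X (Dgm.grow ε hε I)
      = ∑ᶠ K ∈ {K | (Dgm.grow ε hε I).sub K}, Y K := hinv _
    _ = ∑ᶠ K ∈ Dgm.grow ε hε '' {J | I.sub J}, Y K := by rw [Dgm.image_grow_setOf_sub]
    _ = ∑ᶠ (J : Dgm) (_ : I.sub J), Y (Dgm.grow ε hε J) :=
      finsum_mem_image (Dgm.grow_injective ε hε).injOn

/-- Erosion commutes with Möbius inversion. -/
theorem grow_commutes_mobius (S T : Finset ℝ) (X Y : Dgm → G)
    (hX : SConstructible (S : Set ℝ) X) (hY : SFinite (T : Set ℝ) Y)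
    (hinv : ∀ I : Dgm, X I = cumSum Y I) :
    ∀ (ε : ℝ) (hε : 0 ≤ ε) (I : Dgm),
      X (Dgm.grow ε hε I) = ∑ᶠ (J : Dgm) (_ : I.sub J), Y (Dgm.grow ε hε J) :=
  grow_commutes_mobius_general X Y hinv
end

section
/- If two constructible persistence modules F and G are interleaved for some ε ≥ 0, then there is a minimum ε ≥ 0 for which they are ε-interleaved; i.e., the set of interleaving parameters attains its infimum. -/
open CategoryTheory
open scoped ENNReal

variable {C : Type*} [Category C]

/-- The shift functor on the poset `(ℝ, ≤)` viewed as a category: `r ↦ r + ε`. -/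
def Shift (ε : ℝ) : ℝ ⥤ ℝ where
  obj r := r + ε
  map {r r'} f := homOfLE (by linarith [leOfHom f])

/-- `F` and `G` are `ε`-interleaved (for `ε ≥ 0`). -/
def Interleaved (ε : ℝ) (F G : ℝ ⥤ C) : Prop :=
  ∃ (hε : 0 ≤ ε) (φ : F ⟶ Shift ε ⋙ G) (ψ : G ⟶ Shift ε ⋙ F),
    (∀ r : ℝ, φ.app r ≫ ψ.app (r + ε) =
      F.map (homOfLE (by linarith : r ≤ r + ε + ε))) ∧
    (∀ r : ℝ, ψ.app r ≫ φ.app (r + ε) =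
      G.map (homOfLE (by linarith : r ≤ r + ε + ε)))

/-- The interleaving distance, valued in `ℝ≥0∞`. -/
noncomputable def interleavingDist (F G : ℝ ⥤ C) : ℝ≥0∞ :=
  sInf {d : ℝ≥0∞ | ∃ ε : ℝ, d = ENNReal.ofReal ε ∧ Interleaved ε F G}

/-- A persistence module `F : (ℝ,≤) → C` is constructible with respect to a finite set `S`:
below `S` it is constantly an identity object `e`, and it is an isomorphism on any
interval containing no point of `S`. -/
def Constructible (F : ℝ ⥤ C) : Prop :=
  ∃ S : Finset ℝ,
    (∀ p q : ℝ, ∀ h : p ≤ q, Set.Ioc p q ∩ (S : Set ℝ) = ∅ → IsIso (F.map (homOfLE h))) ∧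
    ∃ (e : C) (he : ∀ p : ℝ, (∀ s ∈ S, p < s) → F.obj p = e),
      ∀ (p q : ℝ) (h : p ≤ q) (hp : ∀ s ∈ S, p < s) (hq : ∀ s ∈ S, q < s),
        F.map (homOfLE h) = eqToHom ((he p hp).trans (he q hq).symm)

/-! Let `T` be a finite set off which both `F` and `G` are locally constant, and `m` the infimum
of the interleaving parameters. As `T - T` is finite, some parameter `ε` lies so close to `m` that
no difference of two points of `T` falls in `(m, ε]` or `(2m, 2ε]`. Snapping `r` down to the
largest point `s r` of `T` below it, `F` is an isomorphism along `s r ≤ r` and, by the gap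
condition, `G` is one along `s r + m ≤ s r + ε`; hence each half of an `ε`-interleaving factors
uniquely through the comparison `Shift m ⋙ G ⟶ Shift ε ⋙ G`. The factors form an
`m`-interleaving: both sides of each triangle identity factor the corresponding `ε`-triangle
through `Shift m ⋙ Shift m ⋙ F ⟶ Shift ε ⋙ Shift ε ⋙ F`. -/

open Topology Filter Functor
open scoped Pointwise

section Factorization

variable {I D : Type*} [Category I] [Category D] {s : I ⥤ I} (ι : s ⟶ 𝟭 I)

theorem whiskerRight_comp_eq_whiskerLeft_comp {A B : I ⥤ D} (α : A ⟶ B) :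
    whiskerRight ι A ≫ α = whiskerLeft s α ≫ whiskerRight ι B :=
  (whiskerLeft_comp_whiskerRight ι α).symm

theorem existsUnique_comp_eq_of_isIso_whisker {F A B : I ⥤ D} (τ : A ⟶ B)
    [IsIso (whiskerRight ι F)] [IsIso (whiskerLeft s τ)] (φ : F ⟶ B) :
    ∃! φ₀ : F ⟶ A, φ₀ ≫ τ = φ := by
  refine ⟨inv (whiskerRight ι F) ≫ whiskerLeft s φ ≫ inv (whiskerLeft s τ) ≫ whiskerRight ι A,
    ?_, fun φ₁ hφ₁ => ?_⟩
  · dsimp only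
    rw [Category.assoc, Category.assoc, Category.assoc, whiskerRight_comp_eq_whiskerLeft_comp,
      IsIso.inv_hom_id_assoc, ← whiskerRight_comp_eq_whiskerLeft_comp, IsIso.inv_hom_id_assoc]
  · rw [IsIso.eq_inv_comp, ← hφ₁, whiskerLeft_comp, Category.assoc, IsIso.hom_inv_id_assoc,
      whiskerRight_comp_eq_whiskerLeft_comp]

end Factorization

def natTransOfLE {I : Type*} [Category I] {P Q : I ⥤ ℝ} (h : ∀ i, P.obj i ≤ Q.obj i) :
    P ⟶ Q where
  app i := homOfLE (h i)

-- The alternative `min r c` covers the `r` with no point of `T` below them; taking `c` far below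
-- `T` keeps the snapped point far below `T` there.
noncomputable def floorIn (T : Finset ℝ) (c r : ℝ) : ℝ :=
  (insert (min r c) (T.filter (· ≤ r))).max' (Finset.insert_nonempty _ _)

section FloorIn

variable (T : Finset ℝ) (c : ℝ)

theorem floorIn_le (r : ℝ) : floorIn T c r ≤ r :=
  Finset.max'_le _ _ _ fun x hx => by
    rcases Finset.mem_insert.1 hx with rfl | hx
    · exact min_le_left _ _
    · exact (Finset.mem_filter.1 hx).2

theorem min_le_floorIn (r : ℝ) : min r c ≤ floorIn T c r :=
  Finset.le_max' _ _ (Finset.mem_insert_self _ _)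

variable {T} in
theorem le_floorIn {t r : ℝ} (ht : t ∈ T) (htr : t ≤ r) : t ≤ floorIn T c r :=
  Finset.le_max' _ _ (Finset.mem_insert_of_mem (Finset.mem_filter.2 ⟨ht, htr⟩))

theorem floorIn_mono : Monotone (floorIn T c) := fun r r' hr =>
  Finset.max'_le _ _ _ fun x hx => by
    rcases Finset.mem_insert.1 hx with rfl | hx
    · exact (min_le_min_right c hr).trans (min_le_floorIn T c r')
    · obtain ⟨hxT, hxr⟩ := Finset.mem_filter.1 hx
      exact le_floorIn c hxT (hxr.trans hr)

theorem Ioc_floorIn_inter_eq_empty (r : ℝ) : Set.Ioc (floorIn T c r) r ∩ (T : Set ℝ) = ∅ :=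
  Set.eq_empty_of_forall_notMem fun _ ⟨⟨hlt, hle⟩, ht⟩ => hlt.not_ge (le_floorIn c ht hle)

theorem floorIn_mem_or_le (r : ℝ) : floorIn T c r ∈ T ∨ floorIn T c r ≤ c := by
  rcases Finset.mem_insert.1 (Finset.max'_mem (insert (min r c) (T.filter (· ≤ r)))
    (Finset.insert_nonempty _ _)) with h | h
  · exact Or.inr (le_of_eq_of_le h (min_le_right r c))
  · exact Or.inl (Finset.mem_filter.1 h).1

end FloorIn

def IsIsoOff (T : Finset ℝ) (F : ℝ ⥤ C) : Prop :=
  ∀ p q : ℝ, ∀ h : p ≤ q, Set.Ioc p q ∩ (T : Set ℝ) = ∅ → IsIso (F.map (homOfLE h))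

theorem Constructible.exists_isIsoOff {F : ℝ ⥤ C} (hF : Constructible F) :
    ∃ S, IsIsoOff S F :=
  let ⟨S, hS, _⟩ := hF
  ⟨S, hS⟩

theorem IsIsoOff.mono {S T : Finset ℝ} {F : ℝ ⥤ C} (hST : S ⊆ T) (hF : IsIsoOff S F) :
    IsIsoOff T F := fun p q h hT =>
  hF p q h (Set.subset_eq_empty (Set.inter_subset_inter_right _ (by exact_mod_cast hST)) hT)

theorem Ioc_floorIn_add_inter_eq_empty {T : Finset ℝ} {c a b : ℝ}
    (hgap : ∀ d ∈ T - T, d ∉ Set.Ioc a b) (hc : ∀ t ∈ T, c + b < t) (r : ℝ) :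
    Set.Ioc (floorIn T c r + a) (floorIn T c r + b) ∩ (T : Set ℝ) = ∅ :=
  Set.eq_empty_of_forall_notMem fun t ⟨⟨h₁, h₂⟩, ht⟩ => by
    rcases floorIn_mem_or_le T c r with hr | hr
    · exact hgap _ (Finset.sub_mem_sub ht hr) ⟨by linarith, by linarith⟩
    · linarith [hc t ht]

theorem IsIsoOff.existsUnique_factor {T : Finset ℝ} {F G : ℝ ⥤ C} (hF : IsIsoOff T F)
    (hG : IsIsoOff T G) (c : ℝ) {P Q : ℝ ⥤ ℝ} (ν : P ⟶ Q)
    (hgap : ∀ r, Set.Ioc (P.obj (floorIn T c r)) (Q.obj (floorIn T c r)) ∩ (T : Set ℝ) = ∅)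
    (φ : F ⟶ Q ⋙ G) :
    ∃! φ₀ : F ⟶ P ⋙ G, φ₀ ≫ whiskerRight ν G = φ := by
  let s := (floorIn_mono T c).functor
  let ι : s ⟶ 𝟭 ℝ := natTransOfLE (floorIn_le T c)
  have : IsIso (whiskerRight ι F) :=
    have (r : ℝ) : IsIso ((whiskerRight ι F).app r) := hF _ _ _ (Ioc_floorIn_inter_eq_empty T c r)
    NatIso.isIso_of_isIso_app _
  have : IsIso (whiskerLeft s (whiskerRight ν G)) :=
    have (r : ℝ) : IsIso ((whiskerLeft s (whiskerRight ν G)).app r) :=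
      hG _ _ (leOfHom (ν.app _)) (hgap r)
    NatIso.isIso_of_isIso_app _
  exact existsUnique_comp_eq_of_isIso_whisker ι _ φ

theorem whiskerRight_hcomp {I J K D : Type*} [Category I] [Category J] [Category K] [Category D]
    {P Q : I ⥤ J} {P' Q' : J ⥤ K} (α : P ⟶ Q) (β : P' ⟶ Q') (F : K ⥤ D) :
    whiskerRight (α ◫ β) F = whiskerLeft P (whiskerRight β F) ≫ whiskerRight α (Q' ⋙ F) := by
  ext
  simp

section Interleaving

variable {F G : ℝ ⥤ C} {m ε : ℝ}

theorem Interleaved.nonneg (h : Interleaved ε F G) : 0 ≤ ε := h.1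

def shiftLE {a b : ℝ} (h : a ≤ b) : Shift a ⟶ Shift b :=
  natTransOfLE fun r => add_le_add_right h r

theorem comp_whiskerLeft_comp_whiskerRight_hcomp (hmε : m ≤ ε) {φ : F ⟶ Shift ε ⋙ G}
    {ψ : G ⟶ Shift ε ⋙ F} {φ₀ : F ⟶ Shift m ⋙ G} {ψ₀ : G ⟶ Shift m ⋙ F}
    (hφ₀ : φ₀ ≫ whiskerRight (shiftLE hmε) G = φ) (hψ₀ : ψ₀ ≫ whiskerRight (shiftLE hmε) F = ψ) :
    (φ₀ ≫ whiskerLeft (Shift m) ψ₀) ≫ whiskerRight (shiftLE hmε ◫ shiftLE hmε) F =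
      φ ≫ whiskerLeft (Shift ε) ψ := by
  rw [whiskerRight_hcomp, Category.assoc, ← Category.assoc (whiskerLeft _ ψ₀), ← whiskerLeft_comp,
    hψ₀, whiskerLeft_comp_whiskerRight, ← Category.assoc, hφ₀]

theorem comp_whiskerLeft_eq_whiskerRight_iff (hε : 0 ≤ ε) (φ : F ⟶ Shift ε ⋙ G)
    (ψ : G ⟶ Shift ε ⋙ F) :
    φ ≫ whiskerLeft (Shift ε) ψ = whiskerRight (natTransOfLE (P := 𝟭 ℝ) (Q := Shift ε ⋙ Shift ε)
      fun r => (by linarith : r ≤ r + ε + ε)) F ↔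
    ∀ r, φ.app r ≫ ψ.app (r + ε) = F.map (homOfLE (by linarith : r ≤ r + ε + ε)) :=
  ⟨fun h r => NatTrans.congr_app h r, fun h => NatTrans.ext (funext h)⟩

theorem IsIsoOff.app_comp_app_of_factor {T : Finset ℝ} (hF : IsIsoOff T F) (c : ℝ)
    (hm : 0 ≤ m) (hmε : m ≤ ε)
    (hgap : ∀ r, Set.Ioc (floorIn T c r + m + m) (floorIn T c r + ε + ε) ∩ (T : Set ℝ) = ∅)
    {φ : F ⟶ Shift ε ⋙ G} {ψ : G ⟶ Shift ε ⋙ F} {φ₀ : F ⟶ Shift m ⋙ G} {ψ₀ : G ⟶ Shift m ⋙ F}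
    (hφψ : ∀ r, φ.app r ≫ ψ.app (r + ε) = F.map (homOfLE (by linarith : r ≤ r + ε + ε)))
    (hφ₀ : φ₀ ≫ whiskerRight (shiftLE hmε) G = φ) (hψ₀ : ψ₀ ≫ whiskerRight (shiftLE hmε) F = ψ)
    (r : ℝ) : φ₀.app r ≫ ψ₀.app (r + m) = F.map (homOfLE (by linarith : r ≤ r + m + m)) := by
  have hε : 0 ≤ ε := hm.trans hmε
  refine (comp_whiskerLeft_eq_whiskerRight_iff hm φ₀ ψ₀).1 ?_ r
  refine (hF.existsUnique_factor hF c (shiftLE hmε ◫ shiftLE hmε) hgap _).unique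
    ((comp_whiskerLeft_comp_whiskerRight_hcomp hmε hφ₀ hψ₀).trans
      ((comp_whiskerLeft_eq_whiskerRight_iff hε φ ψ).2 hφψ)) ?_
  rw [← whiskerRight_comp]
  congr 1

theorem Interleaved.of_gap {T : Finset ℝ} (hF : IsIsoOff T F) (hG : IsIsoOff T G) (hm : 0 ≤ m)
    (hmε : m ≤ ε) (hgap₁ : ∀ d ∈ T - T, d ∉ Set.Ioc m ε)
    (hgap₂ : ∀ d ∈ T - T, d ∉ Set.Ioc (m + m) (ε + ε)) (h : Interleaved ε F G) :
    Interleaved m F G := by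
  obtain ⟨hε, φ, ψ, hφψ, hψφ⟩ := h
  obtain ⟨c, hc⟩ : ∃ c, ∀ t ∈ T, c + (ε + ε) < t :=
    let ⟨b, hb⟩ := T.bddBelow
    ⟨b - (ε + ε) - 1, fun t ht => by linarith [hb ht]⟩
  have gap₁ (r : ℝ) : Set.Ioc (floorIn T c r + m) (floorIn T c r + ε) ∩ (T : Set ℝ) = ∅ :=
    Ioc_floorIn_add_inter_eq_empty hgap₁ (fun t ht => by linarith [hc t ht]) r
  have gap₂ (r : ℝ) :
      Set.Ioc (floorIn T c r + m + m) (floorIn T c r + ε + ε) ∩ (T : Set ℝ) = ∅ := by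
    simpa only [add_assoc] using Ioc_floorIn_add_inter_eq_empty hgap₂ hc r
  obtain ⟨φ₀, hφ₀, -⟩ := hF.existsUnique_factor hG c (shiftLE hmε) gap₁ φ
  obtain ⟨ψ₀, hψ₀, -⟩ := hG.existsUnique_factor hF c (shiftLE hmε) gap₁ ψ
  exact ⟨hm, φ₀, ψ₀, hF.app_comp_app_of_factor c hm hmε gap₂ hφψ hφ₀ hψ₀,
    hG.app_comp_app_of_factor c hm hmε gap₂ hψφ hψ₀ hφ₀⟩

end Interleaving

theorem eventually_notMem_Ioc (D : Finset ℝ) (x : ℝ) :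
    ∀ᶠ y in 𝓝 x, ∀ d ∈ D, d ∉ Set.Ioc x y := by
  refine D.eventually_all.2 fun d _ => ?_
  rcases lt_or_ge x d with hxd | hdx
  · filter_upwards [eventually_lt_nhds hxd] with y hy hd using hy.not_ge hd.2
  · exact Eventually.of_forall fun y hd => hdx.not_gt hd.1

/-- If two constructible persistence modules are interleaved for some `ε`, then there is a
minimum `ε` at which they are interleaved. -/
theorem interleaving_min_attained (F G : ℝ ⥤ C)
    (hF : Constructible F) (hG : Constructible G)
    (h : ∃ ε : ℝ, Interleaved ε F G) :
    ∃ ε₀ : ℝ, Interleaved ε₀ F G ∧ ∀ ε : ℝ, Interleaved ε F G → ε₀ ≤ ε := by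
  obtain ⟨S, hS⟩ := hF.exists_isIsoOff
  obtain ⟨S', hS'⟩ := hG.exists_isIsoOff
  set T := S ∪ S'
  set m := sInf {ε | Interleaved ε F G}
  have hglb : IsGLB {ε | Interleaved ε F G} m := isGLB_csInf h ⟨0, fun _ => Interleaved.nonneg⟩
  have hgap : ∀ᶠ ε in 𝓝 m,
      (∀ d ∈ T - T, d ∉ Set.Ioc m ε) ∧ ∀ d ∈ T - T, d ∉ Set.Ioc (m + m) (ε + ε) :=
    (eventually_notMem_Ioc _ m).and
      ((tendsto_id.add tendsto_id).eventually (eventually_notMem_Ioc _ (m + m)))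
  obtain ⟨ε, hε, hgap₁, hgap₂⟩ :=
    ((hglb.frequently_mem h).and_eventually (nhdsWithin_le_nhds hgap)).exists
  exact ⟨m, hε.of_gap (hS.mono Finset.subset_union_left) (hS'.mono Finset.subset_union_right)
    (hglb.2 fun _ => Interleaved.nonneg) (hglb.1 hε) hgap₁ hgap₂, fun _ hε' => hglb.1 hε'⟩
end

section
/- In an additive category C in which every object decomposes as a finite direct sum of objects with local endomorphism rings, an object a is indecomposable if and only if its endomorphism ring End(a) is local. -/
open CategoryTheory CategoryTheory.Limits

variable {C : Type*} [Category C] [Preadditive C] [HasFiniteBiproducts C] [HasBinaryBiproducts C]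

/-- An object is indecomposable if it is nonzero and not isomorphic to a direct sum of two
nonzero objects. -/
def IndecObj (a : C) : Prop :=
  ¬ IsZero a ∧ ∀ b c : C, ¬ IsZero b → ¬ IsZero c → IsEmpty (a ≅ b ⊞ c)

/-- The Krull–Schmidt property: every object is a finite direct sum of objects with
local endomorphism rings. -/
def KrullSchmidt (C : Type*) [Category C] [Preadditive C] [HasFiniteBiproducts C] : Prop :=
  ∀ a : C, ∃ (n : ℕ) (f : Fin n → C),
    (∀ i, IsLocalRing (End (f i))) ∧ Nonempty (a ≅ ⨁ f)

/-- Transfer `IsLocalRing` along a ring equivalence (noncommutative version). -/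
lemma isLocalRing_of_ringEquiv {R S : Type*} [Semiring R] [Semiring S] [IsLocalRing R]
    (e : R ≃+* S) : IsLocalRing S := by
  haveI : Nontrivial S := ⟨e 0, e 1, fun h => zero_ne_one (α := R) (e.injective h)⟩
  refine ⟨fun {a b} hab => ?_⟩
  have h1 : e.symm a + e.symm b = 1 := by
    rw [← map_add, hab, map_one]
  rcases IsLocalRing.isUnit_or_isUnit_of_add_one h1 with h | h
  · left; simpa using h.map e.toRingHom.toMonoidHom
  · right; simpa using h.map e.toRingHom.toMonoidHom

/-- The conjugation ring equivalence between endomorphism rings in a preadditive category. -/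
def conjRingEquiv {X Y : C} (α : X ≅ Y) : End X ≃+* End Y :=
  { α.conj with
    map_add' := fun f g => by
      show α.inv ≫ (f + g) ≫ α.hom = α.inv ≫ f ≫ α.hom + α.inv ≫ g ≫ α.hom
      rw [Preadditive.add_comp, Preadditive.comp_add] }

/-- An object with local endomorphism ring is nonzero. -/
lemma not_isZero_of_local {X : C} (h : IsLocalRing (End X)) : ¬ IsZero X := by
  intro hz
  exact one_ne_zero (α := End X) (hz.eq_of_src (𝟙 X) 0)

/-- Splitting off the first summand of a biproduct over `Fin (n+1)`. -/
noncomputable def splitFirst {n : ℕ} (f : Fin (n + 1) → C) :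
    (⨁ f) ≅ f 0 ⊞ ⨁ (f ∘ Fin.succ) where
  hom := biprod.lift (biproduct.π f 0) (biproduct.lift fun i => biproduct.π f i.succ)
  inv := biprod.desc (biproduct.ι f 0) (biproduct.desc fun i => biproduct.ι f i.succ)
  hom_inv_id := by
    ext j i
    rcases Fin.eq_zero_or_eq_succ i with rfl | ⟨k, rfl⟩ <;>
      rcases Fin.eq_zero_or_eq_succ j with rfl | ⟨m, rfl⟩ <;>
      simp [biproduct.lift_desc, Preadditive.comp_sum, Preadditive.sum_comp,
        biproduct.ι_π, biproduct.ι_π_assoc, Fin.succ_ne_zero, Ne.symm (Fin.succ_ne_zero _),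
        (Fin.succ_injective n).eq_iff, Fin.val_eq_val, dite_comp, comp_dite,
        eqToHom_trans, Finset.sum_dite_eq]
  inv_hom_id := by
    ext
    all_goals
      simp [biproduct.ι_π, biproduct.ι_π_assoc, Fin.succ_ne_zero,
        Ne.symm (Fin.succ_ne_zero _), (Fin.succ_injective n).eq_iff]

/-- A biproduct with a nonzero summand is nonzero. -/
lemma not_isZero_biproduct {J : Type} [Fintype J] (f : J → C) (i : J)
    (h : ¬ IsZero (f i)) : ¬ IsZero (⨁ f) := by
  intro hz
  apply h
  rw [IsZero.iff_id_eq_zero]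
  have hι : biproduct.ι f i ≫ biproduct.π f i = 𝟙 (f i) := by simp [biproduct.ι_π]
  rw [← hι, hz.eq_of_tgt (biproduct.ι f i) 0, zero_comp]

/-- In a Krull–Schmidt category, an object is indecomposable iff its endomorphism ring is
local. -/
theorem indecomposable_iff_local_end (hC : KrullSchmidt C) (a : C) :
    IndecObj a ↔ IsLocalRing (End a) := by
  constructor
  · rintro ⟨hnz, hind⟩
    obtain ⟨n, f, hloc, ⟨α⟩⟩ := hC a
    match n, f, hloc, α with
    | 0, f, hloc, α =>
      refine absurd ?_ hnz
      refine IsZero.of_iso ?_ α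
      rw [IsZero.iff_id_eq_zero]
      apply biproduct.hom_ext
      exact fun i => i.elim0
    | 1, f, hloc, α =>
      haveI := hloc default
      exact isLocalRing_of_ringEquiv (conjRingEquiv (α ≪≫ biproductUniqueIso f).symm)
    | (m + 2), f, hloc, α =>
      exfalso
      have h0 : ¬ IsZero (f 0) := not_isZero_of_local (hloc 0)
      have h1 : ¬ IsZero (⨁ (f ∘ Fin.succ)) :=
        not_isZero_biproduct _ 0 (not_isZero_of_local (hloc 1))
      exact (hind _ _ h0 h1).false (α ≪≫ splitFirst f)
  · intro hloc
    haveI := hloc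
    refine ⟨not_isZero_of_local hloc, fun b c hb hc => ⟨fun α => ?_⟩⟩
    set eb : End a := α.hom ≫ biprod.fst ≫ biprod.inl ≫ α.inv with heb
    set ec : End a := α.hom ≫ biprod.snd ≫ biprod.inr ≫ α.inv with hec
    have hsum : eb + ec = 1 := by
      show eb + ec = 𝟙 a
      rw [heb, hec]
      simp only [← Category.assoc]
      rw [← Preadditive.add_comp]
      simp only [Category.assoc]
      rw [← Preadditive.comp_add, biprod.total, Category.comp_id, α.hom_inv_id]
    rcases IsLocalRing.isUnit_or_isUnit_of_add_one (R := End a) hsum with hu | hu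
    · -- eb is a unit and idempotent, hence eb = 1, forcing c to be zero
      have hidem : eb * eb = eb := by
        show eb ≫ eb = eb
        rw [heb]
        simp
      have hb1 : eb = 1 := by
        obtain ⟨u, hu⟩ := hu
        calc eb = (↑u⁻¹ * u) * eb := by rw [u.inv_mul, one_mul]
          _ = ↑u⁻¹ * (eb * eb) := by rw [hu, mul_assoc]
          _ = ↑u⁻¹ * eb := by rw [hidem]
          _ = 1 := by rw [← hu, u.inv_mul]
      have hfl : biprod.fst ≫ biprod.inl = 𝟙 (b ⊞ c) := by
        have : α.hom ≫ biprod.fst ≫ biprod.inl ≫ α.inv = 𝟙 a := hb1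
        calc biprod.fst ≫ biprod.inl
            = α.inv ≫ (α.hom ≫ biprod.fst ≫ biprod.inl ≫ α.inv) ≫ α.hom := by simp
          _ = 𝟙 (b ⊞ c) := by rw [this]; simp
      apply hc
      rw [IsZero.iff_id_eq_zero]
      have : biprod.inr ≫ biprod.fst ≫ biprod.inl = biprod.inr ≫ 𝟙 (b ⊞ c) := by rw [hfl]
      simpa using (congrArg (· ≫ (biprod.snd : b ⊞ c ⟶ c)) this).symm
    · have hidem : ec * ec = ec := by
        show ec ≫ ec = ec
        rw [hec]
        simp
      have hc1 : ec = 1 := by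
        obtain ⟨u, hu⟩ := hu
        calc ec = (↑u⁻¹ * u) * ec := by rw [u.inv_mul, one_mul]
          _ = ↑u⁻¹ * (ec * ec) := by rw [hu, mul_assoc]
          _ = ↑u⁻¹ * ec := by rw [hidem]
          _ = 1 := by rw [← hu, u.inv_mul]
      have hfl : biprod.snd ≫ biprod.inr = 𝟙 (b ⊞ c) := by
        have : α.hom ≫ biprod.snd ≫ biprod.inr ≫ α.inv = 𝟙 a := hc1
        calc biprod.snd ≫ biprod.inr
            = α.inv ≫ (α.hom ≫ biprod.snd ≫ biprod.inr ≫ α.inv) ≫ α.hom := by simp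
          _ = 𝟙 (b ⊞ c) := by rw [this]; simp
      apply hb
      rw [IsZero.iff_id_eq_zero]
      have : biprod.inl ≫ biprod.snd ≫ biprod.inr = biprod.inl ≫ 𝟙 (b ⊞ c) := by rw [hfl]
      simpa using (congrArg (· ≫ (biprod.fst : b ⊞ c ⟶ b)) this).symm
end
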